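/- arXiv:2011.05576 — 2 statements merged into one kernel-verified Lean document; each statement's English description precedes it below -/
import Mathlib

section
/- Let S : ℝ → ℝ be non-decreasing and differentiable, and define U(p) = ∫₀^p q · S'(q) dq. Then for all real numbers p, q: p · (S(p) − S(q)) ≥ U(p) − U(q). -/
/-- Key inequality (18): for `S` non-decreasing differentiable and
`U p = ∫₀^p q S'(q) dq`, one has `p (S p − S q) ≥ U p − U q`. -/
theorem stmt0 (S U : ℝ → ℝ) (hmono : Monotone S) (hdiff : Differentiable ℝ S)
    (hU : ∀ p, U p = ∫ q in (0:ℝ)..p, q * deriv S q) :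
    ∀ p q : ℝ, p * (S p - S q) ≥ U p - U q := by
  have hd0 : ∀ x, 0 ≤ deriv S x := by
    intro x
    have ht := hasDerivWithinAt_iff_tendsto_slope.mp
      ((hdiff x).hasDerivAt.hasDerivWithinAt (s := Set.Ioi x))
    have hs : Set.Ioi x \ {x} = Set.Ioi x :=
      Set.diff_singleton_eq_self (by simp)
    rw [hs] at ht
    refine ge_of_tendsto ht ?_
    filter_upwards [self_mem_nhdsWithin] with y hy
    have hxy : x < y := hy
    have := hmono hxy.le
    rw [slope_def_field]
    exact div_nonneg (by linarith) (by linarith)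
  intro p q
  have hint : ∀ a b : ℝ, IntervalIntegrable (deriv S) MeasureTheory.volume a b := fun a b =>
    intervalIntegral.intervalIntegrable_deriv_of_nonneg (hdiff.continuous.continuousOn)
      (fun x _ => (hdiff x).hasDerivAt) (fun x _ => hd0 x)
  have hintm : ∀ a b : ℝ, IntervalIntegrable (fun r => r * deriv S r) MeasureTheory.volume a b :=
    fun a b => (hint a b).continuousOn_mul continuousOn_id
  have hUdiff : U p - U q = ∫ r in q..p, r * deriv S r := by
    rw [hU, hU]
    rw [← intervalIntegral.integral_interval_sub_left (hintm 0 p) (hintm 0 q)]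
  have hftc : S p - S q = ∫ r in q..p, deriv S r :=
    (intervalIntegral.integral_deriv_eq_sub (fun x _ => hdiff x) (hint q p)).symm
  have hmul : p * (S p - S q) = ∫ r in q..p, p * deriv S r := by
    rw [hftc, ← intervalIntegral.integral_const_mul]
  rw [ge_iff_le, hUdiff, hmul]
  have hsub : (∫ r in q..p, p * deriv S r) - (∫ r in q..p, r * deriv S r)
      = ∫ r in q..p, (p - r) * deriv S r := by
    rw [← intervalIntegral.integral_sub ((hint q p).const_mul p) (hintm q p)]
    congr 1; ext r; ring
  have : 0 ≤ ∫ r in q..p, (p - r) * deriv S r := by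
    rcases le_total q p with h | h
    · apply intervalIntegral.integral_nonneg h
      intro r hr
      exact mul_nonneg (by linarith [hr.2]) (hd0 r)
    · rw [intervalIntegral.integral_symm p q, neg_nonneg]
      have h2 : 0 ≤ ∫ r in p..q, -((p - r) * deriv S r) := by
        apply intervalIntegral.integral_nonneg h
        intro r hr
        have : (p - r) * deriv S r ≤ 0 :=
          mul_nonpos_of_nonpos_of_nonneg (by linarith [hr.1]) (hd0 r)
        linarith
      rw [intervalIntegral.integral_neg] at h2
      linarith
    
  linarith [hsub]
end

section
/- Let S : ℝ → [0,1] be non-decreasing, surjective onto an interval, and continuous, and let (pₙ)ₙ ⊂ L²(Ω) converge weakly in L²(Ω) to p̄, while S(pₙ) converges strongly in L²(Ω) (and hence a.e. up to subsequence) to some limit s̄. Then s̄ = S(p̄) almost everywhere (Minty-type identification). -/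
/-! Minty's trick. Monotonicity of `S` gives `∫_A (S pₙ - S q) (pₙ - q) ≥ 0` for every set `A` of
finite measure and every constant `q`. Splitting `S pₙ - S q = (S pₙ - s̄) + (s̄ - S q)`, the first
product is strong × bounded (weakly convergent sequences are bounded, by Banach–Steinhaus) and
tends to `0`, while the second is weak × fixed and tends to `∫_A (s̄ - S q) (p̄ - q)`. Hence
`(s̄ - S q)(p̄ - q) ≥ 0` a.e. for every rational `q`, which by continuity of `S` forces
`s̄ = S p̄`. The localisation to sets of finite measure needs `μ` to be σ-finite; in general all
the data vanish off a σ-finite set, and there `S pₙ - s̄ = S 0` is constant, so `S 0 = 0` unless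
that set is null. -/

open MeasureTheory Filter
open Topology
open scoped ENNReal

namespace MeasureTheory

variable {Ω : Type*} [MeasurableSpace Ω] {μ : Measure Ω}

def TendstoWeakL2 (μ : Measure Ω) (f : ℕ → Ω → ℝ) (g : Ω → ℝ) : Prop :=
  ∀ φ : Ω → ℝ, MemLp φ 2 μ → Tendsto (fun n => ∫ x, f n x * φ x ∂μ) atTop (𝓝 (∫ x, g x * φ x ∂μ))

theorem MemLp.integrable_mul' {f g : Ω → ℝ} (hf : MemLp f 2 μ) (hg : MemLp g 2 μ) :
    Integrable (fun x => f x * g x) μ :=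
  hf.integrable_mul hg

theorem integral_mul_coeFn_eq_inner {f : Ω → ℝ} (hf : MemLp f 2 μ) (φ : Lp ℝ 2 μ) :
    ∫ x, f x * φ x ∂μ = inner ℝ (hf.toLp f) φ := by
  rw [L2.inner_def]
  refine integral_congr_ae ?_
  filter_upwards [hf.coeFn_toLp] with x hx
  simp [hx, mul_comm]

theorem enorm_integral_mul_le {f g : Ω → ℝ} (hf : AEStronglyMeasurable f μ)
    (hg : AEStronglyMeasurable g μ) :
    ‖∫ x, f x * g x ∂μ‖ₑ ≤ eLpNorm f 2 μ * eLpNorm g 2 μ := by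
  calc ‖∫ x, f x * g x ∂μ‖ₑ ≤ eLpNorm (fun x => f x * g x) 1 μ := by
        rw [eLpNorm_one_eq_lintegral_enorm]; exact enorm_integral_le_lintegral_enorm _
    _ ≤ eLpNorm f 2 μ * eLpNorm g 2 μ := by
      simpa using! eLpNorm_le_eLpNorm_mul_eLpNorm_of_nnnorm (p := 2) (q := 2) (r := 1) hf hg
        (· * ·) 1 (.of_forall fun _ => by simp)

theorem tendsto_integral_mul_of_tendsto_eLpNorm_zero {ι : Type*} {l : Filter ι}
    {f g : ι → Ω → ℝ} (hf : ∀ i, AEStronglyMeasurable (f i) μ)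
    (hg : ∀ i, AEStronglyMeasurable (g i) μ) (hf0 : Tendsto (fun i => eLpNorm (f i) 2 μ) l (𝓝 0))
    {C : ℝ≥0∞} (hC : C ≠ ∞) (hgC : ∀ i, eLpNorm (g i) 2 μ ≤ C) :
    Tendsto (fun i => ∫ x, f i x * g i x ∂μ) l (𝓝 0) := by
  rw [tendsto_zero_iff_enorm_tendsto_zero]
  have hbound : Tendsto (fun i => eLpNorm (f i) 2 μ * C) l (𝓝 0) := by
    simpa using ENNReal.Tendsto.mul_const hf0 (.inr hC)
  exact tendsto_of_tendsto_of_tendsto_of_le_of_le tendsto_const_nhds hbound (fun _ => zero_le)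
    fun i => (enorm_integral_mul_le (hf i) (hg i)).trans (by gcongr; exact hgC i)

theorem tendsto_eLpNorm_restrict_zero {ι : Type*} {l : Filter ι} {f : ι → Ω → ℝ} {p : ℝ≥0∞}
    (h : Tendsto (fun i => eLpNorm (f i) p μ) l (𝓝 0)) (s : Set Ω) :
    Tendsto (fun i => eLpNorm (f i) p (μ.restrict s)) l (𝓝 0) :=
  tendsto_of_tendsto_of_tendsto_of_le_of_le tendsto_const_nhds h (fun _ => zero_le)
    fun _ => eLpNorm_mono_measure _ Measure.restrict_le_self

namespace TendstoWeakL2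

variable {p : ℕ → Ω → ℝ} {pbar : Ω → ℝ}

theorem exists_eLpNorm_le (hweak : TendstoWeakL2 μ p pbar) (hp : ∀ n, MemLp (p n) 2 μ) :
    ∃ C ≠ ∞, ∀ n, eLpNorm (p n) 2 μ ≤ C := by
  obtain ⟨C, hC⟩ := banach_steinhaus (g := fun n => innerSL ℝ ((hp n).toLp (p n))) fun φ => by
    obtain ⟨C, hC⟩ := (hweak φ (Lp.memLp φ)).norm.bddAbove_range
    exact ⟨C, fun n => by simpa [integral_mul_coeFn_eq_inner (hp n)] using hC ⟨n, rfl⟩⟩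
  refine ⟨ENNReal.ofReal C, ENNReal.ofReal_ne_top, fun n => ?_⟩
  rw [← ENNReal.ofReal_toReal (hp n).eLpNorm_ne_top, ← Lp.norm_toLp _ (hp n)]
  exact ENNReal.ofReal_le_ofReal (by simpa using hC n)

theorem restrict (hweak : TendstoWeakL2 μ p pbar) {s : Set Ω} (hs : MeasurableSet s) :
    TendstoWeakL2 (μ.restrict s) p pbar := by
  intro φ hφ
  have hφs : MemLp (s.indicator φ) 2 μ := (memLp_indicator_iff_restrict hs).2 hφ
  simpa only [← integral_indicator hs, Set.indicator_mul_right] using hweak _ hφs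

theorem sub_const [IsFiniteMeasure μ] (hweak : TendstoWeakL2 μ p pbar)
    (hp : ∀ n, MemLp (p n) 2 μ) (hpbar : MemLp pbar 2 μ) (c : ℝ) :
    TendstoWeakL2 μ (fun n x => p n x - c) (fun x => pbar x - c) := by
  intro φ hφ
  have hsplit : ∀ f : Ω → ℝ, MemLp f 2 μ →
      ∫ x, (f x - c) * φ x ∂μ = ∫ x, f x * φ x ∂μ - c * ∫ x, φ x ∂μ := fun f hf => by
    simp only [sub_mul]
    rw [integral_sub (hf.integrable_mul' hφ) ((hφ.integrable one_le_two).const_mul c),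
      integral_const_mul]
  simp only [hsplit _ (hp _), hsplit _ hpbar]
  exact (hweak φ hφ).sub_const _

end TendstoWeakL2

theorem _root_.Monotone.sub_mul_sub_nonneg {S : ℝ → ℝ} (hS : Monotone S) (a b : ℝ) :
    0 ≤ (S a - S b) * (a - b) := by
  rcases le_total a b with h | h
  · exact mul_nonneg_of_nonpos_of_nonpos (sub_nonpos.2 (hS h)) (sub_nonpos.2 h)
  · exact mul_nonneg (sub_nonneg.2 (hS h)) (sub_nonneg.2 h)

theorem eq_of_forall_rat_mul_nonneg {S : ℝ → ℝ} (hS : Continuous S) {s t : ℝ}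
    (h : ∀ q : ℚ, 0 ≤ (s - S q) * (t - q)) : s = S t := by
  by_contra hne
  rcases lt_or_gt_of_ne hne with hlt | hgt
  · obtain ⟨l, u, ⟨hl, hu⟩, hsub⟩ :=
      mem_nhds_iff_exists_Ioo_subset.1 (hS.continuousAt.eventually (lt_mem_nhds hlt))
    obtain ⟨q, hlq, hqt⟩ := exists_rat_btwn hl
    have hSq : s < S q := hsub ⟨hlq, hqt.trans hu⟩
    nlinarith [h q]
  · obtain ⟨l, u, ⟨hl, hu⟩, hsub⟩ :=
      mem_nhds_iff_exists_Ioo_subset.1 (hS.continuousAt.eventually (gt_mem_nhds hgt))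
    obtain ⟨q, htq, hqu⟩ := exists_rat_btwn hu
    have hSq : S q < s := hsub ⟨hl.trans htq, hqu⟩
    nlinarith [h q]

section Minty

variable {S : ℝ → ℝ} {p : ℕ → Ω → ℝ} {pbar sbar : Ω → ℝ}

theorem integral_mul_nonneg_of_tendstoWeakL2 [IsFiniteMeasure μ] (hmono : Monotone S)
    (hcont : Continuous S) (hp : ∀ n, MemLp (p n) 2 μ) (hpbar : MemLp pbar 2 μ)
    (hweak : TendstoWeakL2 μ p pbar) (hsbar : MemLp sbar 2 μ)
    (hstrong : Tendsto (fun n => eLpNorm (fun x => S (p n x) - sbar x) 2 μ) atTop (𝓝 0))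
    (q : ℝ) : 0 ≤ ∫ x, (sbar x - S q) * (pbar x - q) ∂μ := by
  have hr : ∀ n, MemLp (fun x => p n x - q) 2 μ := fun n => (hp n).sub (memLp_const q)
  have hφ : MemLp (fun x => sbar x - S q) 2 μ := hsbar.sub (memLp_const _)
  have hmeas : ∀ n, AEStronglyMeasurable (fun x => S (p n x) - sbar x) μ := fun n =>
    (hcont.comp_aestronglyMeasurable (hp n).1).sub hsbar.1
  obtain ⟨C, hC, hCb⟩ := (hweak.sub_const hp hpbar q).exists_eLpNorm_le hr
  have hstrong_part := tendsto_integral_mul_of_tendsto_eLpNorm_zero hmeas (fun n => (hr n).1)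
    hstrong hC hCb
  have hweak_part := hweak.sub_const hp hpbar q _ hφ
  have hsplit : ∀ᶠ n in atTop, ∫ x, (S (p n x) - S q) * (p n x - q) ∂μ =
      ∫ x, (S (p n x) - sbar x) * (p n x - q) ∂μ + ∫ x, (p n x - q) * (sbar x - S q) ∂μ := by
    filter_upwards [hstrong.eventually_lt_const zero_lt_one] with n hn
    have hf : MemLp (fun x => S (p n x) - sbar x) 2 μ := ⟨hmeas n, hn.trans ENNReal.one_lt_top⟩
    rw [← integral_add (hf.integrable_mul' (hr n)) ((hr n).integrable_mul' hφ)]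
    exact integral_congr_ae (.of_forall fun x => by ring)
  have hnonneg : ∀ n, 0 ≤ ∫ x, (S (p n x) - S q) * (p n x - q) ∂μ := fun n =>
    integral_nonneg fun x => hmono.sub_mul_sub_nonneg _ _
  have hlim := ge_of_tendsto ((hstrong_part.add hweak_part).congr' (hsplit.mono fun _ h => h.symm))
    (.of_forall hnonneg)
  simpa only [zero_add, mul_comm] using hlim

theorem ae_eq_comp_of_tendstoWeakL2 [SigmaFinite μ] (hmono : Monotone S)
    (hcont : Continuous S) (hp : ∀ n, MemLp (p n) 2 μ) (hpbar : MemLp pbar 2 μ)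
    (hweak : TendstoWeakL2 μ p pbar) (hsbar : MemLp sbar 2 μ)
    (hstrong : Tendsto (fun n => eLpNorm (fun x => S (p n x) - sbar x) 2 μ) atTop (𝓝 0)) :
    sbar =ᵐ[μ] fun x => S (pbar x) := by
  have hq : ∀ q : ℚ, ∀ᵐ x ∂μ, 0 ≤ (sbar x - S q) * (pbar x - q) := fun q =>
    ae_nonneg_of_forall_setIntegral_nonneg_of_sigmaFinite
      (fun A _ hA =>
        haveI : IsFiniteMeasure (μ.restrict A) := isFiniteMeasure_restrict.2 hA.ne
        ((hsbar.restrict A).sub (memLp_const _)).integrable_mul'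
          ((hpbar.restrict A).sub (memLp_const _)))
      (fun A hAm hA =>
        haveI : IsFiniteMeasure (μ.restrict A) := isFiniteMeasure_restrict.2 hA.ne
        integral_mul_nonneg_of_tendstoWeakL2 hmono hcont (fun n => (hp n).restrict A)
          (hpbar.restrict A) (hweak.restrict hAm) (hsbar.restrict A)
          (tendsto_eLpNorm_restrict_zero hstrong A) q)
  filter_upwards [ae_all_iff.2 hq] with x hx using eq_of_forall_rat_mul_nonneg hcont hx

theorem ae_eq_comp_of_ae_eq_zero
    (hstrong : Tendsto (fun n => eLpNorm (fun x => S (p n x) - sbar x) 2 μ) atTop (𝓝 0))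
    (hp : ∀ n, p n =ᵐ[μ] 0) (hpbar : pbar =ᵐ[μ] 0) (hsbar : sbar =ᵐ[μ] 0) :
    sbar =ᵐ[μ] fun x => S (pbar x) := by
  have hconst : ∀ n, eLpNorm (fun x => S (p n x) - sbar x) 2 μ = eLpNorm (fun _ => S 0) 2 μ :=
    fun n => eLpNorm_congr_ae <| by
      filter_upwards [hp n, hsbar] with x hpx hsx
      simp [hpx, hsx]
  have hS0 : (fun _ => S 0) =ᵐ[μ] 0 := by
    rw [← eLpNorm_eq_zero_iff aestronglyMeasurable_const two_ne_zero]
    exact tendsto_nhds_unique (by simpa only [hconst] using hstrong) tendsto_const_nhds |>.symm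
  filter_upwards [hS0, hpbar, hsbar] with x h0 hpx hsx
  simp_all

end Minty

end MeasureTheory

theorem stmt15_general {Ω : Type*} [MeasurableSpace Ω] (μ : Measure Ω)
    (S : ℝ → ℝ) (hmono : Monotone S) (hcont : Continuous S)
    (p : ℕ → Ω → ℝ) (pbar : Ω → ℝ)
    (hp : ∀ n, MemLp (p n) 2 μ) (hpbar : MemLp pbar 2 μ)
    (hweak : ∀ φ : Ω → ℝ, MemLp φ 2 μ →
      Tendsto (fun n => ∫ x, p n x * φ x ∂μ) atTop (nhds (∫ x, pbar x * φ x ∂μ)))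
    (sbar : Ω → ℝ) (hsbar : MemLp sbar 2 μ)
    (hstrong :
      Tendsto (fun n => eLpNorm (fun x => S (p n x) - sbar x) 2 μ) atTop (nhds 0)) :
    sbar =ᵐ[μ] fun x => S (pbar x) := by
  have hfin : ∀ {f : Ω → ℝ}, MemLp f 2 μ → AEFinStronglyMeasurable f μ := fun hf =>
    hf.aefinStronglyMeasurable two_ne_zero ENNReal.ofNat_ne_top
  have on_sigmaFiniteSet : ∀ {f : Ω → ℝ} (hf : MemLp f 2 μ),
      ∀ᵐ x ∂μ.restrict (hfin hf).sigmaFiniteSet, sbar x = S (pbar x) := fun hf =>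
    haveI := (hfin hf).sigmaFinite_restrict
    ae_eq_comp_of_tendstoWeakL2 hmono hcont (fun n => (hp n).restrict _) (hpbar.restrict _)
      (TendstoWeakL2.restrict hweak (hfin hf).measurableSet) (hsbar.restrict _)
      (tendsto_eLpNorm_restrict_zero hstrong _)
  set T := (hfin hpbar).sigmaFiniteSet ∪ (hfin hsbar).sigmaFiniteSet ∪
    ⋃ n, (hfin (hp n)).sigmaFiniteSet
  refine ae_of_ae_restrict_of_ae_restrict_compl T ?_ ?_
  · simp only [T, ae_restrict_union_iff, ae_restrict_iUnion_iff]
    exact ⟨⟨on_sigmaFiniteSet hpbar, on_sigmaFiniteSet hsbar⟩, fun n => on_sigmaFiniteSet (hp n)⟩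
  · have vanish : ∀ {f : Ω → ℝ} (hf : MemLp f 2 μ), (hfin hf).sigmaFiniteSet ⊆ T →
        f =ᵐ[μ.restrict Tᶜ] 0 := fun hf hT =>
      ae_restrict_of_ae_restrict_of_subset (Set.compl_subset_compl.2 hT) (hfin hf).ae_eq_zero_compl
    exact ae_eq_comp_of_ae_eq_zero (tendsto_eLpNorm_restrict_zero hstrong _)
      (fun n => vanish (hp n) <|
        (Set.subset_iUnion (fun n => (hfin (hp n)).sigmaFiniteSet) n).trans Set.subset_union_right)
      (vanish hpbar (by intro x hx; simp [T, hx]))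
      (vanish hsbar (by intro x hx; simp [T, hx]))

/-- Minty-type identification: if `pₙ ⇀ p̄` weakly in `L²` and `S(pₙ) → s̄`
strongly in `L²` with `S` non-decreasing continuous with interval range in
`[0,1]`, then `s̄ = S(p̄)` a.e. -/
theorem stmt15 {Ω : Type*} [MeasurableSpace Ω] (μ : Measure Ω)
    (S : ℝ → ℝ) (hmono : Monotone S) (hcont : Continuous S)
    (hrange : ∀ p, S p ∈ Set.Icc (0:ℝ) 1) (hconn : (Set.range S).OrdConnected)
    (p : ℕ → Ω → ℝ) (pbar : Ω → ℝ)
    (hp : ∀ n, MemLp (p n) 2 μ) (hpbar : MemLp pbar 2 μ)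
    (hweak : ∀ φ : Ω → ℝ, MemLp φ 2 μ →
      Tendsto (fun n => ∫ x, p n x * φ x ∂μ) atTop (nhds (∫ x, pbar x * φ x ∂μ)))
    (sbar : Ω → ℝ) (hsbar : MemLp sbar 2 μ)
    (hstrong :
      Tendsto (fun n => eLpNorm (fun x => S (p n x) - sbar x) 2 μ) atTop (nhds 0)) :
    sbar =ᵐ[μ] fun x => S (pbar x) :=
  stmt15_general μ S hmono hcont p pbar hp hpbar hweak sbar hsbar hstrong
end
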